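/- arXiv:1809.09219 — 2 statements merged into one kernel-verified Lean document; each statement's English description precedes it below -/
import Mathlib

section
/- Suppose x̄, x̂ ∈ ℝ^N satisfy ‖x̄‖₂ = 1, ‖x̂‖₂ ≤ 1, and for constants γ, λ, p, ν > 0 the inequality (γλ/p)(1 − x̄ᵀx̂) ≤ ν‖x̄‖₁ − ν‖x̂‖₁ + (ν/2)‖x̄ − x̂‖₁ holds. Then ‖x̄ − x̂‖₂ ≤ (3pν/(γλ))·√(‖x̄‖₀). -/
/-!
The ℓ1 terms split over the support `S` of `x̄`: on `S` the reverse triangle inequality bounds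
`|x̄ᵢ| - |x̂ᵢ| + ½|x̄ᵢ - x̂ᵢ|` by `3/2 |x̄ᵢ - x̂ᵢ|`, and off `S` the term is `-½|x̂ᵢ| ≤ 0`.
Cauchy–Schwarz on `S` turns the right-hand side of the hypothesis into at most
`(3ν/2) √|S| ‖x̄ - x̂‖₂`, while `‖x̄‖₂ = 1 ≥ ‖x̂‖₂` gives `‖x̄ - x̂‖₂² ≤ 2 (1 - x̄ᵀx̂)`.
Dividing the resulting quadratic inequality in `‖x̄ - x̂‖₂` by `‖x̄ - x̂‖₂` gives the bound.
-/

open Finset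

lemma abs_sub_abs_add_half_abs_sub_le (a b : ℝ) :
    |a| - |b| + |a - b| / 2 ≤ if a ≠ 0 then 3 / 2 * |a - b| else 0 := by
  split_ifs with ha
  · linarith [abs_sub_abs_le_abs_sub a b]
  · rw [not_not.mp ha, zero_sub, abs_neg, abs_zero]
    linarith [abs_nonneg b]

lemma le_div_of_mul_sq_le_mul {a c d : ℝ} (ha : 0 < a) (hc : 0 ≤ c) (hd : 0 ≤ d)
    (h : a * d ^ 2 ≤ c * d) : d ≤ c / a := by
  rcases hd.eq_or_lt with rfl | hd
  · positivity
  · rw [le_div_iff₀ ha]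
    nlinarith

namespace Finset

variable {ι : Type*}

lemma sum_abs_le_sqrt_card_mul_sqrt_sum_sq (s : Finset ι) (f : ι → ℝ) :
    ∑ i ∈ s, |f i| ≤ √(#s : ℝ) * √(∑ i ∈ s, f i ^ 2) := by
  simpa using Real.sum_mul_le_sqrt_mul_sqrt s (fun _ ↦ 1) (fun i ↦ |f i|)

variable [Fintype ι]

lemma sum_sub_sq_le_two_mul_one_sub_sum_mul {x y : ι → ℝ} (hx : ∑ i, x i ^ 2 = 1)
    (hy : ∑ i, y i ^ 2 ≤ 1) : ∑ i, (x i - y i) ^ 2 ≤ 2 * (1 - ∑ i, x i * y i) := by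
  have hexpand : ∑ i, (x i - y i) ^ 2 = ∑ i, x i ^ 2 + ∑ i, y i ^ 2 - 2 * ∑ i, x i * y i := by
    rw [← sum_add_distrib, mul_sum, ← sum_sub_distrib]
    exact sum_congr rfl fun i _ ↦ by ring
  linarith

lemma sum_abs_sub_sum_abs_add_half_le (x y : ι → ℝ) :
    ∑ i, |x i| - ∑ i, |y i| + (∑ i, |x i - y i|) / 2
      ≤ 3 / 2 * ∑ i ∈ univ.filter (fun i ↦ x i ≠ 0), |x i - y i| := by
  rw [mul_sum, sum_filter, sum_div, ← sum_sub_distrib, ← sum_add_distrib]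
  exact sum_le_sum fun i _ ↦ abs_sub_abs_add_half_abs_sub_le (x i) (y i)

lemma sum_abs_sub_sum_abs_add_half_le_sqrt_mul (x y : ι → ℝ) :
    ∑ i, |x i| - ∑ i, |y i| + (∑ i, |x i - y i|) / 2
      ≤ 3 / 2 * (√(#(univ.filter fun i ↦ x i ≠ 0) : ℝ) * √(∑ i, (x i - y i) ^ 2)) := by
  set S := univ.filter fun i ↦ x i ≠ 0
  have hS : √(∑ i ∈ S, (x i - y i) ^ 2) ≤ √(∑ i, (x i - y i) ^ 2) :=
    Real.sqrt_le_sqrt <| sum_le_sum_of_subset_of_nonneg (subset_univ S) fun i _ _ ↦ sq_nonneg _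
  calc _ ≤ 3 / 2 * ∑ i ∈ S, |x i - y i| := sum_abs_sub_sum_abs_add_half_le x y
    _ ≤ 3 / 2 * (√(#S : ℝ) * √(∑ i ∈ S, (x i - y i) ^ 2)) := by
      gcongr; exact sum_abs_le_sqrt_card_mul_sqrt_sum_sq S _
    _ ≤ _ := by gcongr

end Finset

/-- Deterministic core of Theorem 1 for the ℓ1 penalty:
if `‖x̄‖₂ = 1`, `‖x̂‖₂ ≤ 1` and
`(γλ/p)(1 − x̄ᵀx̂) ≤ ν‖x̄‖₁ − ν‖x̂‖₁ + (ν/2)‖x̄ − x̂‖₁`, then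
`‖x̄ − x̂‖₂ ≤ (3pν/(γλ))√(‖x̄‖₀)`. -/
theorem error_bound_l1 {N : ℕ} (xbar xhat : Fin N → ℝ) (γ lam p ν : ℝ)
    (hγ : 0 < γ) (hlam : 0 < lam) (hp : 0 < p) (hν : 0 < ν)
    (hxbar : Real.sqrt (∑ i, (xbar i) ^ 2) = 1)
    (hxhat : Real.sqrt (∑ i, (xhat i) ^ 2) ≤ 1)
    (h : (γ * lam / p) * (1 - ∑ i, xbar i * xhat i)
        ≤ ν * ∑ i, |xbar i| - ν * ∑ i, |xhat i| + (ν / 2) * ∑ i, |xbar i - xhat i|) :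
    Real.sqrt (∑ i, (xbar i - xhat i) ^ 2)
      ≤ (3 * p * ν / (γ * lam)) * Real.sqrt ((univ.filter fun i => xbar i ≠ 0).card) := by
  set d := √(∑ i, (xbar i - xhat i) ^ 2)
  set s := √(#(univ.filter fun i ↦ xbar i ≠ 0) : ℝ)
  have hxbar_sq : ∑ i, xbar i ^ 2 = 1 := Real.sqrt_eq_one.mp hxbar
  have hxhat_sq : ∑ i, xhat i ^ 2 ≤ 1 := Real.sqrt_le_one.mp hxhat
  have hd_sq : d ^ 2 ≤ 2 * (1 - ∑ i, xbar i * xhat i) := by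
    rw [Real.sq_sqrt (sum_nonneg fun i _ ↦ sq_nonneg _)]
    exact sum_sub_sq_le_two_mul_one_sub_sum_mul hxbar_sq hxhat_sq
  have hrhs : ν * ∑ i, |xbar i| - ν * ∑ i, |xhat i| + ν / 2 * ∑ i, |xbar i - xhat i|
      ≤ ν * (3 / 2 * (s * d)) := by
    calc _ = ν * (∑ i, |xbar i| - ∑ i, |xhat i| + (∑ i, |xbar i - xhat i|) / 2) := by ring
      _ ≤ _ := mul_le_mul_of_nonneg_left
          (sum_abs_sub_sum_abs_add_half_le_sqrt_mul xbar xhat) hν.le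
  have hquad : γ * lam / p * d ^ 2 ≤ 3 * ν * s * d := by
    have hcoef : 0 < γ * lam / p := by positivity
    linarith [mul_le_mul_of_nonneg_left hd_sq hcoef.le]
  calc d ≤ 3 * ν * s / (γ * lam / p) :=
        le_div_of_mul_sq_le_mul (by positivity) (by positivity) (Real.sqrt_nonneg _) hquad
    _ = _ := by field_simp
end

section
/- For ν > 0, ρ > 0, b ∈ ℝ with the MCP penalty g_{ν,b'}(t) (with parameter b' > 1/ρ), the minimizer of t ↦ g_{ν,b'}(t) − b t + (ρ/2)t² over ℝ is: t* = 0 if |b| ≤ ν; t* = sign(b)(|b| − ν)/(ρ − 1/b') if ν < |b| ≤ b'νρ; and t* = b/ρ if |b| > b'νρ, where g_{ν,b'}(t) = ν|t| − t²/(2b') for |t| ≤ b'ν and g_{ν,b'}(t) = b'ν²/2 for |t| > b'ν. -/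
/-!
Since the penalty is even and `b t ≤ |b| |t|`, the objective at `t` is bounded below by the
objective with data `|b|` at `|t|`, with equality when `b t ≥ 0`; the threshold has the sign
of `b` and its absolute value is the threshold for `|b|`, so it suffices to treat `b ≥ 0`
on the half-line `t ≥ 0`. There the lower branch of the penalty turns the objective into
the strictly convex quadratic `(ρ - 1/b')/2 · t² - (b - ν) t`, which also bounds it from below everywhere, because
`ν t - t²/(2b') ≤ b'ν²/2`. Its minimizer over `t ≥ 0` is `max 0 ((b - ν)/(ρ - 1/b'))`,
which is the answer as long as it lies in `[0, b'ν]`, i.e. `b ≤ b'νρ`. Beyond that the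
quadratic is decreasing on `[0, b'ν]`, so it is at least its value at `b'ν`, where both
branches agree, and the upper branch `b'ν²/2 + ρ/2 · t² - b t` is minimized at `b/ρ`.
-/

section Quadratic

variable {𝕜 : Type*} [Field 𝕜] [LinearOrder 𝕜] [IsStrictOrderedRing 𝕜] {a c s x : 𝕜}

theorem half_mul_sq_sub_mul_le_of_le (ha : 0 ≤ a) (hsx : s ≤ x) (hx : a * x ≤ c) :
    a / 2 * x ^ 2 - c * x ≤ a / 2 * s ^ 2 - c * s := by
  nlinarith [mul_nonneg (sub_nonneg.2 hsx) (mul_nonneg ha (sub_nonneg.2 hsx))]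

theorem half_mul_sq_sub_mul_le_of_ge (ha : 0 ≤ a) (hxs : x ≤ s) (hx : c ≤ a * x) :
    a / 2 * x ^ 2 - c * x ≤ a / 2 * s ^ 2 - c * s := by
  nlinarith [mul_nonneg (sub_nonneg.2 hxs) (mul_nonneg ha (sub_nonneg.2 hxs))]

theorem half_mul_sq_sub_mul_le_of_mul_eq (ha : 0 ≤ a) (hx : a * x = c) :
    a / 2 * x ^ 2 - c * x ≤ a / 2 * s ^ 2 - c * s := by
  rcases le_total s x with hsx | hxs
  · exact half_mul_sq_sub_mul_le_of_le ha hsx hx.le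
  · exact half_mul_sq_sub_mul_le_of_ge ha hxs hx.ge

end Quadratic

noncomputable section MCP

def mcpPenalty (ν b' t : ℝ) : ℝ :=
  if |t| ≤ b' * ν then ν * |t| - t ^ 2 / (2 * b') else b' * ν ^ 2 / 2

def mcpObjective (ν ρ b' b t : ℝ) : ℝ :=
  mcpPenalty ν b' t - b * t + ρ / 2 * t ^ 2

def firmThreshold (ν ρ b' b : ℝ) : ℝ :=
  if |b| ≤ ν then 0
  else if |b| ≤ b' * ν * ρ then Real.sign b * (|b| - ν) / (ρ - 1 / b')
  else b / ρ

variable {ν ρ b' b : ℝ}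

theorem mcpPenalty_abs (t : ℝ) : mcpPenalty ν b' |t| = mcpPenalty ν b' t := by
  simp only [mcpPenalty, abs_abs, sq_abs]

theorem mcpObjective_abs_le (t : ℝ) :
    mcpObjective ν ρ b' |b| |t| ≤ mcpObjective ν ρ b' b t := by
  have : b * t ≤ |b| * |t| := by rw [← abs_mul]; exact le_abs_self _
  simp only [mcpObjective, mcpPenalty_abs, sq_abs]
  linarith

theorem mcpObjective_abs_of_mul_nonneg {t : ℝ} (h : 0 ≤ b * t) :
    mcpObjective ν ρ b' |b| |t| = mcpObjective ν ρ b' b t := by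
  simp only [mcpObjective, mcpPenalty_abs, sq_abs, ← abs_mul, abs_of_nonneg h]

theorem sub_sq_div_le_mcpPenalty (hb' : 0 < b') (t : ℝ) :
    ν * |t| - t ^ 2 / (2 * b') ≤ mcpPenalty ν b' t := by
  unfold mcpPenalty
  split_ifs
  · exact le_rfl
  · have key :
        ν * |t| - t ^ 2 / (2 * b') = b' * ν ^ 2 / 2 - (|t| - b' * ν) ^ 2 / (2 * b') := by
      field_simp
      rw [← sq_abs t]
      ring
    rw [key]
    linarith [div_nonneg (sq_nonneg (|t| - b' * ν)) (by positivity : (0 : ℝ) ≤ 2 * b')]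

theorem mcpObjective_eq_of_le (hb' : 0 < b') {s : ℝ} (hs : 0 ≤ s) (hsν : s ≤ b' * ν) :
    mcpObjective ν ρ b' b s = (ρ - 1 / b') / 2 * s ^ 2 - (b - ν) * s := by
  rw [mcpObjective, mcpPenalty, if_pos (by rwa [abs_of_nonneg hs]), abs_of_nonneg hs]
  field_simp
  ring

theorem half_mul_sq_sub_mul_le_mcpObjective (hb' : 0 < b') {s : ℝ} (hs : 0 ≤ s) :
    (ρ - 1 / b') / 2 * s ^ 2 - (b - ν) * s ≤ mcpObjective ν ρ b' b s := by
  have := sub_sq_div_le_mcpPenalty (ν := ν) hb' s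
  rw [abs_of_nonneg hs] at this
  have e : (ρ - 1 / b') / 2 * s ^ 2 - (b - ν) * s
      = ν * s - s ^ 2 / (2 * b') - b * s + ρ / 2 * s ^ 2 := by
    field_simp
    ring
  rw [e, mcpObjective]
  linarith

theorem mcpObjective_eq_of_lt_abs {s : ℝ} (hsν : b' * ν < |s|) :
    mcpObjective ν ρ b' b s = b' * ν ^ 2 / 2 + (ρ / 2 * s ^ 2 - b * s) := by
  rw [mcpObjective, mcpPenalty, if_neg hsν.not_ge]
  ring

theorem abs_firmThreshold (hν : 0 < ν) (hρ : 0 < ρ) (hα : 0 < ρ - 1 / b') :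
    |firmThreshold ν ρ b' b| = firmThreshold ν ρ b' |b| := by
  unfold firmThreshold
  rw [abs_abs]
  split_ifs with h₁ h₂
  · exact abs_zero
  · have hb₀ : b ≠ 0 := by rintro rfl; simp at h₁; linarith
    have hsign : |Real.sign b| = 1 := by
      rcases Real.sign_apply_eq_of_ne_zero b hb₀ with h | h <;> simp [h]
    rw [Real.sign_of_pos (r := |b|) (by linarith), abs_div, abs_mul, hsign, abs_of_pos hα,
      abs_of_nonneg (by linarith : 0 ≤ |b| - ν)]
  · rw [abs_div, abs_of_pos hρ]

theorem mul_firmThreshold_nonneg (hρ : 0 < ρ) (hα : 0 < ρ - 1 / b') :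
    0 ≤ b * firmThreshold ν ρ b' b := by
  unfold firmThreshold
  split_ifs with h₁ h₂
  · simp
  · rw [mul_div_assoc, ← mul_assoc, mul_comm b]
    exact mul_nonneg (Real.sign_mul_nonneg b) (div_nonneg (by linarith) hα.le)
  · rw [mul_div_assoc']
    exact div_nonneg (mul_self_nonneg b) hρ.le

theorem mcpObjective_zero_le (hν : 0 < ν) (hb' : 0 < b') (hα : 0 < ρ - 1 / b') (hbν : b ≤ ν)
    {s : ℝ} (hs : 0 ≤ s) : mcpObjective ν ρ b' b 0 ≤ mcpObjective ν ρ b' b s :=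
  calc mcpObjective ν ρ b' b 0 = (ρ - 1 / b') / 2 * 0 ^ 2 - (b - ν) * 0 :=
        mcpObjective_eq_of_le hb' le_rfl (by positivity)
    _ ≤ (ρ - 1 / b') / 2 * s ^ 2 - (b - ν) * s :=
        half_mul_sq_sub_mul_le_of_ge hα.le hs (by linarith)
    _ ≤ mcpObjective ν ρ b' b s := half_mul_sq_sub_mul_le_mcpObjective hb' hs

theorem mcpObjective_sub_div_le (hb' : 0 < b') (hα : 0 < ρ - 1 / b') (hνb : ν < b)
    (hbρ : b ≤ b' * ν * ρ) {s : ℝ} (hs : 0 ≤ s) :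
    mcpObjective ν ρ b' b ((b - ν) / (ρ - 1 / b')) ≤ mcpObjective ν ρ b' b s := by
  set x := (b - ν) / (ρ - 1 / b')
  have hx₀ : 0 ≤ x := div_nonneg (by linarith) hα.le
  have hxν : x ≤ b' * ν := by
    have : b' * ν * (1 / b') = ν := by field_simp
    rw [div_le_iff₀ hα, mul_sub]
    linarith
  calc mcpObjective ν ρ b' b x = (ρ - 1 / b') / 2 * x ^ 2 - (b - ν) * x :=
        mcpObjective_eq_of_le hb' hx₀ hxν
    _ ≤ (ρ - 1 / b') / 2 * s ^ 2 - (b - ν) * s :=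
        half_mul_sq_sub_mul_le_of_mul_eq hα.le (mul_div_cancel₀ _ hα.ne')
    _ ≤ mcpObjective ν ρ b' b s := half_mul_sq_sub_mul_le_mcpObjective hb' hs

theorem mcpObjective_div_le (hν : 0 < ν) (hρ : 0 < ρ) (hb' : 0 < b') (hα : 0 < ρ - 1 / b')
    (hbρ : b' * ν * ρ < b) {s : ℝ} (hs : 0 ≤ s) :
    mcpObjective ν ρ b' b (b / ρ) ≤ mcpObjective ν ρ b' b s := by
  have hx : b' * ν < |b / ρ| := by
    have : 0 < b' * ν * ρ := by positivity
    rw [abs_of_pos (div_pos (by linarith) hρ), lt_div_iff₀ hρ]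
    exact hbρ
  have hmin (u : ℝ) :
      mcpObjective ν ρ b' b (b / ρ) ≤ b' * ν ^ 2 / 2 + (ρ / 2 * u ^ 2 - b * u) := by
    rw [mcpObjective_eq_of_lt_abs hx]
    exact (add_le_add_iff_left _).2
      (half_mul_sq_sub_mul_le_of_mul_eq hρ.le (mul_div_cancel₀ _ hρ.ne'))
  rcases le_or_gt s (b' * ν) with hsν | hsν
  · calc mcpObjective ν ρ b' b (b / ρ)
        ≤ b' * ν ^ 2 / 2 + (ρ / 2 * (b' * ν) ^ 2 - b * (b' * ν)) := hmin _
      _ = (ρ - 1 / b') / 2 * (b' * ν) ^ 2 - (b - ν) * (b' * ν) := by field_simp; ring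
      _ ≤ (ρ - 1 / b') / 2 * s ^ 2 - (b - ν) * s := by
          refine half_mul_sq_sub_mul_le_of_le hα.le hsν ?_
          have : b' * ν * (1 / b') = ν := by field_simp
          rw [mul_comm, mul_sub]
          linarith
      _ = mcpObjective ν ρ b' b s := (mcpObjective_eq_of_le hb' hs hsν).symm
  · rw [mcpObjective_eq_of_lt_abs (s := s) (by rwa [abs_of_nonneg hs])]
    exact hmin s

theorem mcpObjective_firmThreshold_le (hν : 0 < ν) (hρ : 0 < ρ) (hb' : 0 < b')
    (hα : 0 < ρ - 1 / b') (hb : 0 ≤ b) {s : ℝ} (hs : 0 ≤ s) :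
    mcpObjective ν ρ b' b (firmThreshold ν ρ b' b) ≤ mcpObjective ν ρ b' b s := by
  rw [firmThreshold, abs_of_nonneg hb]
  split_ifs with hbν hbρ
  · exact mcpObjective_zero_le hν hb' hα hbν hs
  · rw [Real.sign_of_pos (by linarith), one_mul]
    exact mcpObjective_sub_div_le hb' hα (not_le.1 hbν) hbρ hs
  · exact mcpObjective_div_le hν hρ hb' hα (not_le.1 hbρ) hs

end MCP

/-- The scalar z-subproblem with the minimax concave penalty (firm thresholding):
for `b' > 1/ρ`, the minimizer of `t ↦ g_{ν,b'}(t) − bt + (ρ/2)t²` is `0` if `|b| ≤ ν`,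
`sign(b)(|b| − ν)/(ρ − 1/b')` if `ν < |b| ≤ b'νρ`, and `b/ρ` if `|b| > b'νρ`. -/
theorem mcp_firm_thresholding (ν ρ b b' : ℝ) (hν : 0 < ν) (hρ : 0 < ρ) (hb' : 1 / ρ < b')
    (g : ℝ → ℝ)
    (hg : g = fun t => if |t| ≤ b' * ν then ν * |t| - t ^ 2 / (2 * b') else b' * ν ^ 2 / 2)
    (f : ℝ → ℝ) (hf : f = fun t => g t - b * t + (ρ / 2) * t ^ 2)
    (tstar : ℝ)
    (ht : tstar = if |b| ≤ ν then 0
        else if |b| ≤ b' * ν * ρ then Real.sign b * (|b| - ν) / (ρ - 1 / b')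
        else b / ρ) :
    ∀ t, f tstar ≤ f t := by
  intro t
  have hb'₀ : 0 < b' := (one_div_pos.2 hρ).trans hb'
  have hα : 0 < ρ - 1 / b' := sub_pos.2 ((one_div_lt hρ hb'₀).1 hb')
  have hf' : f = mcpObjective ν ρ b' b := by subst hf hg; rfl
  have ht' : tstar = firmThreshold ν ρ b' b := ht
  rw [hf', ht']
  calc mcpObjective ν ρ b' b (firmThreshold ν ρ b' b)
      = mcpObjective ν ρ b' |b| |firmThreshold ν ρ b' b| :=
        (mcpObjective_abs_of_mul_nonneg (mul_firmThreshold_nonneg hρ hα)).symm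
    _ = mcpObjective ν ρ b' |b| (firmThreshold ν ρ b' |b|) := by
        rw [abs_firmThreshold hν hρ hα]
    _ ≤ mcpObjective ν ρ b' |b| |t| :=
        mcpObjective_firmThreshold_le hν hρ hb'₀ hα (abs_nonneg b) (abs_nonneg t)
    _ ≤ mcpObjective ν ρ b' b t := mcpObjective_abs_le t
end
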